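/- Let (X, 𝔄, μ) be a σ-finite measure space and τ an invertible bimeasurable non-singular transformation with C_τ invertible and bounded on L^{pq}(X) together with its inverse. If C_τ is uniformly positively expansive, then μ(τ^{-n}(A))/μ(A) → ∞ as n → ∞, uniformly over measurable sets A with 0 < μ(A) < ∞. -/

import Mathlib

open MeasureTheory Filter Set
open scoped ENNReal NNReal

/-- Decreasing rearrangement `g*(t)` of a measurable function. -/
noncomputable def rearr {X : Type*} [MeasurableSpace X] (μ : Measure X) (g : X → ℂ)
    (t : ℝ) : ℝ≥0∞ :=
  sInf {l : ℝ≥0∞ | μ {x | l < (‖g x‖₊ : ℝ≥0∞)} ≤ ENNReal.ofReal t}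

/-- Maximal function `g**(t) = (1/t) ∫_0^t g*(s) ds`. -/
noncomputable def maxFun {X : Type*} [MeasurableSpace X] (μ : Measure X) (g : X → ℂ)
    (t : ℝ) : ℝ≥0∞ :=
  (ENNReal.ofReal t)⁻¹ * ∫⁻ s in Set.Ioc (0:ℝ) t, rearr μ g s

/-- `‖g‖_{pq}^q = (q/p) ∫_0^∞ (t^{1/p} g**(t))^q dt/t`. -/
noncomputable def lorentzQ {X : Type*} [MeasurableSpace X] (μ : Measure X) (g : X → ℂ)
    (p q : ℝ) : ℝ≥0∞ :=
  ENNReal.ofReal (q / p) *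
    ∫⁻ t in Set.Ioi (0:ℝ), (ENNReal.ofReal (t ^ (1/p)) * maxFun μ g t) ^ q / ENNReal.ofReal t

/-- The Lorentz norm `‖g‖_{pq}` for `q < ∞`. -/
noncomputable def lorentzNorm {X : Type*} [MeasurableSpace X] (μ : Measure X) (g : X → ℂ)
    (p q : ℝ) : ℝ≥0∞ :=
  lorentzQ μ g p q ^ (1 / q)

/-- The Lorentz norm `‖g‖_{p∞} = sup_{t>0} t^{1/p} g**(t)`. -/
noncomputable def lorentzSup {X : Type*} [MeasurableSpace X] (μ : Measure X) (g : X → ℂ)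
    (p : ℝ) : ℝ≥0∞ :=
  ⨆ (t : ℝ) (_ : 0 < t), ENNReal.ofReal (t ^ (1/p)) * maxFun μ g t

/-- A non-singular measurable transformation. -/
def Nonsingular {X : Type*} [MeasurableSpace X] (μ : Measure X) (τ : X → X) : Prop :=
  Measurable τ ∧ ∀ A : Set X, MeasurableSet A → μ A = 0 → μ (τ ⁻¹' A) = 0

/-!
For `B` of finite measure, `z • 𝟙_B` has decreasing rearrangement `|z| 𝟙_{[0, μ B)}`, so its
maximal function is `|z| min(t, μ B) / t` and the Lorentz integral splits at `t = μ B` into two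
power integrals, giving `‖z 𝟙_B‖_{pq} = |z| (p / (p - 1))^{1/q} μ(B)^{1/p}`. Normalising `𝟙_A` to
unit norm, its image under `C_τ^n` is the same multiple of `𝟙_{τ^{-n} A}`, of norm
`(μ(τ^{-n} A) / μ(A))^{1/p}`; expansivity with the constant `M^{1/p}` gives
`μ(τ^{-n} A) ≥ M μ(A)`.
-/

lemma setOf_lt_nnnorm_indicator_const {X : Type*} (B : Set X) (z : ℂ) (l : ℝ≥0∞) :
    {x | l < (‖B.indicator (fun _ => z) x‖₊ : ℝ≥0∞)} = if l < ‖z‖ₑ then B else ∅ := by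
  ext x
  by_cases hx : x ∈ B <;> split_ifs <;> simp_all [enorm_eq_nnnorm]

lemma lintegral_Ioc_zero_rpow_sub_one {a r : ℝ} (ha : 0 ≤ a) (hr : 0 < r) :
    ∫⁻ t in Ioc 0 a, ENNReal.ofReal (t ^ (r - 1)) = ENNReal.ofReal (a ^ r / r) := by
  have hint : IntegrableOn (fun t : ℝ => t ^ (r - 1)) (Ioc 0 a) :=
    (intervalIntegrable_iff_integrableOn_Ioc_of_le ha).mp
      (intervalIntegral.intervalIntegrable_rpow' (by linarith))
  rw [← ofReal_integral_eq_lintegral_ofReal hint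
    (ae_restrict_of_forall_mem measurableSet_Ioc fun t ht => by have := ht.1; positivity),
    ← intervalIntegral.integral_of_le ha, integral_rpow (Or.inl (by linarith)), sub_add_cancel,
    Real.zero_rpow hr.ne', sub_zero]

lemma lintegral_Ioi_rpow_sub_one {a r : ℝ} (ha : 0 < a) (hr : r < 0) :
    ∫⁻ t in Ioi a, ENNReal.ofReal (t ^ (r - 1)) = ENNReal.ofReal (a ^ r / -r) := by
  rw [← ofReal_integral_eq_lintegral_ofReal (integrableOn_Ioi_rpow_of_lt (by linarith) ha)
    (ae_restrict_of_forall_mem measurableSet_Ioi fun t ht => by have := ha.trans ht; positivity),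
    integral_Ioi_rpow_of_lt (by linarith) ha, sub_add_cancel, div_neg, neg_div]

section

variable {X : Type*} [MeasurableSpace X] (μ : Measure X) (B : Set X) (z : ℂ)

lemma rearr_indicator_const (t : ℝ) :
    rearr μ (B.indicator fun _ => z) t = if ENNReal.ofReal t < μ B then ‖z‖ₑ else 0 := by
  unfold rearr
  simp only [setOf_lt_nnnorm_indicator_const]
  split_ifs with ht
  · convert csInf_Ici (a := ‖z‖ₑ) using 2
    ext l
    by_cases hl : l < ‖z‖ₑ <;> simp [hl, ht.not_ge, not_lt.mp]
  · refine le_antisymm (sInf_le ?_) zero_le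
    change μ (if _ then B else ∅) ≤ _
    split_ifs <;> simp [not_lt.mp ht]

lemma maxFun_indicator_const (hB : μ B ≠ ⊤) {t : ℝ} (ht : 0 < t) :
    maxFun μ (B.indicator fun _ => z) t = ENNReal.ofReal (‖z‖ * min t (μ B).toReal / t) := by
  have hlevel : EqOn (rearr μ (B.indicator fun _ => z))
      ((Iio (μ B).toReal).indicator fun _ => ‖z‖ₑ) (Ioc 0 t) := fun s hs => by
    simp only [rearr_indicator_const, ENNReal.ofReal_lt_iff_lt_toReal hs.1.le hB, indicator,
      mem_Iio]
  have hvol : volume (Iio (μ B).toReal ∩ Ioc 0 t) = ENNReal.ofReal (min t (μ B).toReal) := by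
    rw [inter_comm, measure_congr (ae_eq_refl _ |>.inter Iio_ae_eq_Iic), Ioc_inter_Iic,
      Real.volume_Ioc, sub_zero]
  rw [maxFun, setLIntegral_congr_fun measurableSet_Ioc hlevel,
    lintegral_indicator_const measurableSet_Iio, Measure.restrict_apply measurableSet_Iio, hvol,
    ← ofReal_norm, ← ENNReal.ofReal_mul (norm_nonneg z), ENNReal.ofReal_div_of_pos ht,
    ENNReal.div_eq_inv_mul]

lemma lorentzQ_integrand_indicator_const (hB : μ B ≠ ⊤) {p q t : ℝ} (hq : 0 ≤ q) (ht : 0 < t) :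
    (ENNReal.ofReal (t ^ (1 / p)) * maxFun μ (B.indicator fun _ => z) t) ^ q / ENNReal.ofReal t
      = ENNReal.ofReal (‖z‖ ^ q * min t (μ B).toReal ^ q * t ^ (q / p - q - 1)) := by
  have hmin : 0 ≤ min t (μ B).toReal := le_min ht.le ENNReal.toReal_nonneg
  rw [maxFun_indicator_const μ B z hB ht, ← ENNReal.ofReal_mul (by positivity),
    ENNReal.ofReal_rpow_of_nonneg (by positivity) hq, ← ENNReal.ofReal_div_of_pos ht]
  congr 1
  rw [Real.mul_rpow (by positivity) (by positivity), Real.div_rpow (by positivity) ht.le,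
    Real.mul_rpow (norm_nonneg z) hmin, ← Real.rpow_mul ht.le, Real.rpow_sub ht,
    Real.rpow_sub ht, Real.rpow_one]
  field_simp

lemma lorentzQ_indicator_const (hB0 : μ B ≠ 0) (hB : μ B ≠ ⊤) {p q : ℝ} (hp : 1 < p)
    (hq : 0 < q) :
    lorentzQ μ (B.indicator fun _ => z) p q
      = ENNReal.ofReal (‖z‖ ^ q * (p / (p - 1)) * (μ B).toReal ^ (q / p)) := by
  set a := (μ B).toReal
  have ha : 0 < a := ENNReal.toReal_pos hB0 hB
  have hp0 : 0 < p := by linarith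
  have hqp : q / p - q < 0 := by
    rw [sub_neg, div_lt_iff₀ hp0]
    nlinarith
  have hsmall : ∫⁻ t in Ioc 0 a,
      (ENNReal.ofReal (t ^ (1 / p)) * maxFun μ (B.indicator fun _ => z) t) ^ q / ENNReal.ofReal t
      = ENNReal.ofReal (‖z‖ ^ q) * ENNReal.ofReal (a ^ (q / p) / (q / p)) := by
    rw [← lintegral_Ioc_zero_rpow_sub_one ha.le (by positivity),
      ← lintegral_const_mul' _ _ ENNReal.ofReal_ne_top]
    refine setLIntegral_congr_fun measurableSet_Ioc fun t ht => ?_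
    rw [lorentzQ_integrand_indicator_const μ B z hB hq.le ht.1, min_eq_left ht.2,
      ← ENNReal.ofReal_mul (by positivity), mul_assoc, ← Real.rpow_add ht.1]
    ring_nf
  have hlarge : ∫⁻ t in Ioi a,
      (ENNReal.ofReal (t ^ (1 / p)) * maxFun μ (B.indicator fun _ => z) t) ^ q / ENNReal.ofReal t
      = ENNReal.ofReal (‖z‖ ^ q * a ^ q)
        * ENNReal.ofReal (a ^ (q / p - q) / -(q / p - q)) := by
    rw [← lintegral_Ioi_rpow_sub_one ha hqp, ← lintegral_const_mul' _ _ ENNReal.ofReal_ne_top]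
    refine setLIntegral_congr_fun measurableSet_Ioi fun t ht => ?_
    rw [lorentzQ_integrand_indicator_const μ B z hB hq.le (ha.trans ht), min_eq_right ht.le,
      ← ENNReal.ofReal_mul (by positivity)]
  have hpow : a ^ q * a ^ (q / p - q) = a ^ (q / p) := by
    rw [← Real.rpow_add ha, add_sub_cancel]
  rw [lorentzQ, ← Ioc_union_Ioi_eq_Ioi ha.le,
    lintegral_union measurableSet_Ioi (Ioc_disjoint_Ioi le_rfl), hsmall, hlarge,
    ← ENNReal.ofReal_mul (by positivity), ← ENNReal.ofReal_mul (by positivity),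
    ← ENNReal.ofReal_add (by positivity)
      (mul_nonneg (by positivity) (div_nonneg (by positivity) (by linarith))),
    ← ENNReal.ofReal_mul (by positivity)]
  congr 1
  have hp1 : p - 1 ≠ 0 := by linarith
  have hp1' : 1 - p ≠ 0 := by linarith
  rw [← hpow]
  field_simp
  ring

lemma lorentzQ_indicator_const_of_measure_zero (hB0 : μ B = 0) {p q : ℝ} (hq : 0 < q) :
    lorentzQ μ (B.indicator fun _ => z) p q = 0 := by
  rw [lorentzQ, setLIntegral_congr_fun measurableSet_Ioi fun t ht => by
    rw [lorentzQ_integrand_indicator_const μ B z (by simp [hB0]) hq.le ht, hB0,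
      ENNReal.toReal_zero, min_eq_right (le_of_lt ht), Real.zero_rpow hq.ne', mul_zero,
      zero_mul]]
  simp

lemma lorentzNorm_indicator_const (hB : μ B ≠ ⊤) {p q : ℝ} (hp : 1 < p) (hq : 0 < q) :
    lorentzNorm μ (B.indicator fun _ => z) p q
      = ENNReal.ofReal (‖z‖ * (p / (p - 1)) ^ (1 / q) * (μ B).toReal ^ (1 / p)) := by
  have hp0 : 0 < p := by linarith
  rw [lorentzNorm]
  rcases eq_or_ne (μ B) 0 with hB0 | hB0
  · rw [lorentzQ_indicator_const_of_measure_zero μ B z hB0 hq, hB0, ENNReal.toReal_zero,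
      Real.zero_rpow (one_div_pos.2 hp0).ne', mul_zero, ENNReal.ofReal_zero,
      ENNReal.zero_rpow_of_pos (one_div_pos.2 hq)]
  have ha : 0 < (μ B).toReal := ENNReal.toReal_pos hB0 hB
  have hK : 0 < p / (p - 1) := div_pos hp0 (by linarith)
  rw [lorentzQ_indicator_const μ B z hB0 hB hp hq,
    ENNReal.ofReal_rpow_of_nonneg (by positivity) (one_div_pos.2 hq).le]
  congr 1
  rw [Real.mul_rpow (by positivity) (by positivity), Real.mul_rpow (by positivity) hK.le,
    ← Real.rpow_mul (norm_nonneg z), ← Real.rpow_mul ha.le, mul_one_div_cancel hq.ne',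
    Real.rpow_one, div_mul_div_comm, mul_one, div_mul_cancel_right₀ hq.ne', one_div p]

end

lemma lorentzNorm_indicator_normalized {X : Type*} [MeasurableSpace X] (μ : Measure X)
    {A B : Set X} (hA0 : μ A ≠ 0) (hA : μ A ≠ ⊤) (hB : μ B ≠ ⊤) {p q : ℝ} (hp : 1 < p)
    (hq : 0 < q) :
    lorentzNorm μ
        (B.indicator fun _ => ((((p / (p - 1)) ^ (1 / q) * (μ A).toReal ^ (1 / p))⁻¹ : ℝ) : ℂ))
        p q
      = ENNReal.ofReal (((μ B).toReal / (μ A).toReal) ^ (1 / p)) := by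
  have hK : 0 < (p / (p - 1)) ^ (1 / q) :=
    Real.rpow_pos_of_pos (div_pos (by linarith) (by linarith)) _
  have ha : 0 < (μ A).toReal ^ (1 / p) := Real.rpow_pos_of_pos (ENNReal.toReal_pos hA0 hA) _
  rw [lorentzNorm_indicator_const μ B _ hB hp hq, Complex.norm_real,
    Real.norm_of_nonneg (by positivity),
    Real.div_rpow ENNReal.toReal_nonneg ENNReal.toReal_nonneg]
  field_simp

theorem stmt_14_general {X : Type*} [MeasurableSpace X] (μ : Measure X)
    (τ : X → X)
    (p q : ℝ) (hp : 1 < p) (hq : 1 ≤ q)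
    (hexp : ∀ M : ℝ, 0 < M → ∃ N : ℕ, ∀ n ≥ N, ∀ g : X → ℂ, Measurable g →
      lorentzNorm μ g p q = 1 → ENNReal.ofReal M ≤ lorentzNorm μ (g ∘ τ^[n]) p q) :
    ∀ M : ℝ, 0 < M → ∃ N : ℕ, ∀ n ≥ N, ∀ A : Set X, MeasurableSet A →
      0 < μ A → μ A < ⊤ → ENNReal.ofReal M * μ A ≤ μ ((τ^[n]) ⁻¹' A) := by
  intro M hM
  have hq0 : 0 < q := by linarith
  obtain ⟨N, hN⟩ := hexp (M ^ (1 / p)) (by positivity)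
  refine ⟨N, fun n hn A hA hA0 hAT => ?_⟩
  rcases eq_or_ne (μ (τ^[n] ⁻¹' A)) ⊤ with hpre | hpre
  · simp [hpre]
  have ha : 0 < (μ A).toReal := ENNReal.toReal_pos hA0.ne' hAT.ne
  have hgrowth := hN n hn _ (measurable_const.indicator hA) <| by
    rw [lorentzNorm_indicator_normalized μ hA0.ne' hAT.ne hAT.ne hp hq0, div_self ha.ne',
      Real.one_rpow, ENNReal.ofReal_one]
  rw [show (A.indicator _) ∘ τ^[n] = (τ^[n] ⁻¹' A).indicator _ from rfl,
    lorentzNorm_indicator_normalized μ hA0.ne' hAT.ne hpre hp hq0,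
    ENNReal.ofReal_le_ofReal_iff (by positivity),
    Real.rpow_le_rpow_iff hM.le (by positivity) (by positivity), le_div_iff₀ ha] at hgrowth
  rw [← ENNReal.ofReal_toReal hAT.ne, ← ENNReal.ofReal_toReal hpre, ← ENNReal.ofReal_mul hM.le]
  exact ENNReal.ofReal_le_ofReal hgrowth

/-- if `C_τ` is uniformly positively expansive then
`μ(τ^{-n}(A))/μ(A) → ∞` uniformly over `A` with `0 < μ(A) < ∞`. -/
theorem stmt_14 {X : Type*} [MeasurableSpace X] [Nonempty X] (μ : Measure X) [SigmaFinite μ]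
    (τ : X → X) (hbij : Function.Bijective τ) (hτ : Measurable τ)
    (hbi : ∀ A : Set X, MeasurableSet A → MeasurableSet (τ '' A))
    (hns : Nonsingular μ τ)
    (hns' : ∀ A : Set X, MeasurableSet A → μ A = 0 → μ (τ '' A) = 0)
    (p q : ℝ) (hp : 1 < p) (hq : 1 ≤ q)
    (hbdd : ∃ C : ℝ≥0∞, C < ⊤ ∧
      ∀ g : X → ℂ, lorentzNorm μ (g ∘ τ) p q ≤ C * lorentzNorm μ g p q)
    (hbdd' : ∃ C : ℝ≥0∞, C < ⊤ ∧
      ∀ g : X → ℂ, lorentzNorm μ (fun x => g ((Function.invFun τ) x)) p q ≤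
        C * lorentzNorm μ g p q)
    (hexp : ∀ M : ℝ, 0 < M → ∃ N : ℕ, ∀ n ≥ N, ∀ g : X → ℂ, Measurable g →
      lorentzNorm μ g p q = 1 → ENNReal.ofReal M ≤ lorentzNorm μ (g ∘ τ^[n]) p q) :
    ∀ M : ℝ, 0 < M → ∃ N : ℕ, ∀ n ≥ N, ∀ A : Set X, MeasurableSet A →
      0 < μ A → μ A < ⊤ → ENNReal.ofReal M * μ A ≤ μ ((τ^[n]) ⁻¹' A) :=
  stmt_14_general μ τ p q hp hq hexp
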